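/- arXiv:2105.10667 — 5 statements merged into one kernel-verified Lean document; each statement's English description precedes it below -/
import Mathlib

section
/- Let f : ℝ → ℝ be continuous and 1-periodic with [f] := ∫₀¹ f(t) dt > 0, let F(t) := ∫₀^t f(τ) dτ and k₀ := max_{s∈[0,2]} |F(s)|. Then for all real numbers s < t: (1) F(s) − F(t) ≤ 2k₀ − (t − s − 1)·[f]; (2) ∫_s^t e^{F(τ)−F(t)} dτ ≤ (e^{2k₀+[f]}/[f])·(1 − e^{−(t−s)[f]}); (3) ∫_{−∞}^t e^{F(τ)−F(t)} dτ ≤ e^{2k₀+[f]}/[f]. -/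
open MeasureTheory Real Set

/-! Periodicity gives `F (x + n) = F x + n [f]`, so `F x` equals `⌊x⌋ [f]` up to an error bounded
by `k₀`; hence `F τ - F t ≤ 2 k₀ + [f] - (t - τ) [f]` for all `τ, t`. Thus `e^{F τ - F t}` is
dominated by `e^{2 k₀ + [f]} e^{[f] (τ - t)}`, whose integrals over `[s, t]` and `(-∞, t]` are
explicit. -/

theorem Function.Periodic.primitive_sub_primitive_le {f : ℝ → ℝ} {T : ℝ}
    (hper : Function.Periodic f T) (hT : 0 < T) (hf : IntervalIntegrable f volume 0 T)
    (hmean : 0 ≤ ∫ τ in 0..T, f τ) {k : ℝ} (hk : ∀ x ∈ Icc 0 T, |∫ τ in 0..x, f τ| ≤ k)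
    (s t : ℝ) :
    (∫ τ in 0..s, f τ) - ∫ τ in 0..t, f τ ≤ 2 * k - (t - s - T) / T * ∫ τ in 0..T, f τ := by
  set F := fun x => ∫ τ in 0..x, f τ
  have hne : (F '' Icc 0 T).Nonempty := (nonempty_Icc.2 hT.le).image F
  have hsup : sSup (F '' Icc 0 T) ≤ k :=
    csSup_le hne (forall_mem_image.2 fun x hx => (abs_le.1 (hk x hx)).2)
  have hinf : -k ≤ sInf (F '' Icc 0 T) :=
    le_csInf hne (forall_mem_image.2 fun x hx => (abs_le.1 (hk x hx)).1)
  have hupper := hper.integral_le_sSup_add_zsmul_of_pos hf hT s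
  have hlower := hper.sInf_add_zsmul_le_integral_of_pos hf hT t
  have hfloor : (t - s - T) / T * ∫ τ in 0..T, f τ ≤ (⌊t / T⌋ - ⌊s / T⌋) * ∫ τ in 0..T, f τ := by
    refine mul_le_mul_of_nonneg_right ?_ hmean
    rw [sub_div, sub_div, div_self hT.ne']
    linarith [Int.lt_floor_add_one (t / T), Int.floor_le (s / T)]
  rw [zsmul_eq_mul] at hupper hlower
  linarith

theorem integral_exp_mul_sub {a : ℝ} (ha : a ≠ 0) (s t : ℝ) :
    ∫ τ in s..t, exp (a * (τ - t)) = (1 - exp (-(t - s) * a)) / a := by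
  rw [intervalIntegral.integral_comp_sub_right (fun x => exp (a * x)),
    intervalIntegral.integral_comp_mul_left (fun x => exp x) ha, integral_exp]
  simp only [sub_self, mul_zero, exp_zero, smul_eq_mul]
  rw [show a * (s - t) = -(t - s) * a by ring]
  field_simp

theorem setIntegral_Iic_exp_mul_sub {a : ℝ} (ha : 0 < a) (t : ℝ) :
    ∫ τ in Iic t, exp (a * (τ - t)) = 1 / a := by
  simp_rw [mul_sub, exp_sub]
  rw [MeasureTheory.integral_div, integral_exp_mul_Iic ha]
  field_simp

section DominatedByExp

variable {g : ℝ → ℝ} {C a t : ℝ}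

theorem intervalIntegral_le_of_le_exp_mul_sub (hg : Continuous g) (ha : 0 < a)
    (hle : ∀ τ ≤ t, g τ ≤ C * exp (a * (τ - t))) {s : ℝ} (hst : s ≤ t) :
    ∫ τ in s..t, g τ ≤ C / a * (1 - exp (-(t - s) * a)) := by
  calc ∫ τ in s..t, g τ ≤ ∫ τ in s..t, C * exp (a * (τ - t)) :=
        intervalIntegral.integral_mono_on hst (hg.intervalIntegrable s t)
          (Continuous.intervalIntegrable (by fun_prop) s t) fun τ hτ => hle τ hτ.2
    _ = C / a * (1 - exp (-(t - s) * a)) := by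
        rw [intervalIntegral.integral_const_mul, integral_exp_mul_sub ha.ne']
        ring

theorem setIntegral_Iic_le_of_le_exp_mul_sub (hg : Continuous g) (hg0 : ∀ τ, 0 ≤ g τ)
    (ha : 0 < a) (hle : ∀ τ ≤ t, g τ ≤ C * exp (a * (τ - t))) :
    ∫ τ in Iic t, g τ ≤ C / a := by
  have hdom : IntegrableOn (fun τ => C * exp (a * (τ - t))) (Iic t) := by
    simp_rw [mul_sub, exp_sub]
    exact ((integrableOn_exp_mul_Iic ha t).div_const _).const_mul C
  calc ∫ τ in Iic t, g τ ≤ ∫ τ in Iic t, C * exp (a * (τ - t)) :=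
        setIntegral_mono_on (hdom.mono' hg.aestronglyMeasurable.restrict
          ((ae_restrict_mem measurableSet_Iic).mono fun τ hτ => by
            rw [norm_of_nonneg (hg0 τ)]; exact hle τ hτ))
          hdom measurableSet_Iic hle
    _ = C / a := by
        rw [MeasureTheory.integral_const_mul, setIntegral_Iic_exp_mul_sub ha]
        ring

end DominatedByExp

/-- Basic exponential estimates for a time-periodic damping
coefficient with positive mean. Here `m = [f] = ∫₀¹ f`, `F t = ∫₀ᵗ f`, and
`k₀ = max_{s ∈ [0,2]} |F s|`. -/
theorem damping_exponential_estimates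
    (f F : ℝ → ℝ) (m k₀ : ℝ)
    (hf : Continuous f) (hfper : ∀ t, f (t + 1) = f t)
    (hm : m = ∫ t in (0:ℝ)..1, f t) (hmpos : 0 < m)
    (hF : ∀ t, F t = ∫ τ in (0:ℝ)..t, f τ)
    (hk₀ : IsGreatest ((fun s => |F s|) '' Set.Icc (0:ℝ) 2) k₀) :
    ∀ s t : ℝ, s < t →
      (F s - F t ≤ 2 * k₀ - (t - s - 1) * m) ∧
      ((∫ τ in s..t, Real.exp (F τ - F t)) ≤
        Real.exp (2 * k₀ + m) / m * (1 - Real.exp (-(t - s) * m))) ∧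
      ((∫ τ in Set.Iic t, Real.exp (F τ - F t)) ≤ Real.exp (2 * k₀ + m) / m) := by
  have hdrop : ∀ s t, F s - F t ≤ 2 * k₀ - (t - s - 1) * m := by
    intro s t
    have hk : ∀ x ∈ Icc (0 : ℝ) 1, |∫ τ in 0..x, f τ| ≤ k₀ := fun x hx =>
      hF x ▸ hk₀.2 ⟨x, Icc_subset_Icc_right one_le_two hx, rfl⟩
    simpa only [hF, hm, div_one] using
      Function.Periodic.primitive_sub_primitive_le hfper one_pos (hf.intervalIntegrable 0 1)
        (hm ▸ hmpos.le) hk s t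
  have hFc : Continuous F := by
    rw [funext hF]
    exact intervalIntegral.continuous_primitive (fun a b => hf.intervalIntegrable a b) 0
  intro s t hst
  have hexp : ∀ τ ≤ t, exp (F τ - F t) ≤ exp (2 * k₀ + m) * exp (m * (τ - t)) := by
    intro τ _
    rw [← exp_add, exp_le_exp]
    linarith [hdrop τ t]
  have hg : Continuous fun τ => exp (F τ - F t) := by fun_prop
  refine ⟨hdrop s t, ?_, ?_⟩
  · simpa only [mul_comm m] using intervalIntegral_le_of_le_exp_mul_sub hg hmpos hexp hst.le
  · exact setIntegral_Iic_le_of_le_exp_mul_sub hg (fun τ => (exp_pos _).le) hmpos hexp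
end

section
/- For every α ∈ ℝ and every (x,t) ∈ ℝⁿ × ℝ, the weak KAM solution u_α⁻(x,t) is a finite real number and satisfies −|C(0) − α| · e^{2k₀+[f]}/[f] ≤ u_α⁻(x,t) ≤ |C₀ + α| · e^{2k₀+[f]}/[f], where C(0) is the superlinearity constant at k = 0 (so that L(x,v,t) ≥ −C(0) for all (x,v,t)) and C₀ := sup_{(x,t)} L(x,0,t). -/
/-!
Since `F (u + 1) = F u + [f]`, the function `F u - [f] u` is `1`-periodic, so the discount factor
satisfies `e^{F s - F t} ≤ e^{2 k₀ + [f]} e^{[f] (s - t)}`, whose integral over `(-∞, t]` is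
`e^{2 k₀ + [f]} / [f]`. Bounding `L + α` below by `-|C(0) - α|` bounds every action below; the
constant curve at `x` is admissible, with action at most `|C₀ + α| e^{2 k₀ + [f]} / [f]`.
-/

open MeasureTheory Real Filter
open scoped RealInnerProductSpace

noncomputable section

/-- `ℝⁿ` with the Euclidean norm. -/
abbrev Evec (n : ℕ) : Type := EuclideanSpace ℝ (Fin n)

/-- The vector of `Evec n` with integer coordinates `k`. -/
def intVec {n : ℕ} (k : Fin n → ℤ) : Evec n := WithLp.toLp 2 (fun i => (k i : ℝ))

/-- `γ` is absolutely continuous on the interval `S` with derivative `γ'`: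
on any subinterval of `S` it is the indefinite integral of the locally
integrable function `γ'`. -/
def ACOn {n : ℕ} (γ γ' : ℝ → Evec n) (S : Set ℝ) : Prop :=
  ∀ a ∈ S, ∀ b ∈ S,
    IntervalIntegrable γ' MeasureTheory.volume a b ∧ γ b = γ a + ∫ τ in a..b, γ' τ

/-- The set of (finite) actions `∫_{-∞}^t e^{F(s)-F(t)} (L + α)` of admissible
absolutely continuous curves `γ : (-∞, t] → ℝⁿ` with `γ t = x`. -/
def wkSet {n : ℕ} (F : ℝ → ℝ) (L : Evec n → Evec n → ℝ → ℝ) (α : ℝ)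
    (x : Evec n) (t : ℝ) : Set ℝ :=
  { r | ∃ γ γ' : ℝ → Evec n, ACOn γ γ' (Set.Iic t) ∧ γ t = x ∧
      MeasureTheory.IntegrableOn
        (fun s => Real.exp (F s - F t) * (L (γ s) (γ' s) s + α)) (Set.Iic t) ∧
      r = ∫ s in Set.Iic t, Real.exp (F s - F t) * (L (γ s) (γ' s) s + α) }

/-- The weak KAM solution `u_α⁻(x,t)`. -/
def uWK {n : ℕ} (F : ℝ → ℝ) (L : Evec n → Evec n → ℝ → ℝ) (α : ℝ)
    (x : Evec n) (t : ℝ) : ℝ :=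
  sInf (wkSet F L α x t)

open Set

lemma primitive_add_one {f : ℝ → ℝ} (hf : Continuous f) (hper : Function.Periodic f 1) (u : ℝ) :
    ∫ τ in (0 : ℝ)..u + 1, f τ = (∫ τ in (0 : ℝ)..u, f τ) + ∫ τ in (0 : ℝ)..1, f τ := by
  simpa using hper.intervalIntegral_add_eq_add 0 u fun a b => hf.intervalIntegrable a b

lemma sub_le_of_map_add_one {F : ℝ → ℝ} {m k : ℝ} (hm : 0 ≤ m) (hF : ∀ u, F (u + 1) = F u + m)
    (hk : ∀ u ∈ Ico (0 : ℝ) 1, |F u| ≤ k) (s t : ℝ) :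
    F s - F t ≤ 2 * k + m + m * (s - t) := by
  have hG : Function.Periodic (fun u => F u - m * u) 1 := fun u => by
    simp only [hF]; ring
  have hG_bounds (u : ℝ) : -k - m ≤ F u - m * u ∧ F u - m * u ≤ k := by
    have hfract : F u - m * u = F (Int.fract u) - m * Int.fract u := by
      have := hG.sub_int_mul_eq (x := u) ⌊u⌋
      simp only [mul_one] at this
      rw [Int.fract, this]
    have hFu := abs_le.1 (hk _ ⟨Int.fract_nonneg u, Int.fract_lt_one u⟩)
    have : m * Int.fract u ≤ m := mul_le_of_le_one_right hm (Int.fract_lt_one u).le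
    have : 0 ≤ m * Int.fract u := mul_nonneg hm (Int.fract_nonneg u)
    rw [hfract]
    constructor <;> linarith
  linarith [(hG_bounds s).2, (hG_bounds t).1]

section DiscountedIntegral

variable {m t c : ℝ} {g : ℝ → ℝ}

lemma integrableOn_exp_mul_sub_Iic (hm : 0 < m) (t : ℝ) :
    IntegrableOn (fun s => exp (m * (s - t))) (Iic t) := by
  simp_rw [mul_sub, exp_sub]
  exact (integrableOn_exp_mul_Iic hm t).div_const _

lemma integral_exp_mul_sub_Iic (hm : 0 < m) (t : ℝ) :
    ∫ s in Iic t, exp (m * (s - t)) = 1 / m := by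
  simp_rw [mul_sub, exp_sub]
  rw [integral_div, integral_exp_mul_Iic hm, div_div_cancel_left' (exp_pos _).ne']
  exact one_div m |>.symm

lemma integral_Iic_le_of_le_exp_mul (hm : 0 < m) (hg : IntegrableOn g (Iic t))
    (hle : ∀ s, g s ≤ c * exp (m * (s - t))) : ∫ s in Iic t, g s ≤ c / m := by
  calc ∫ s in Iic t, g s ≤ ∫ s in Iic t, c * exp (m * (s - t)) :=
        integral_mono hg ((integrableOn_exp_mul_sub_Iic hm t).const_mul c) hle
    _ = c / m := by rw [integral_const_mul, integral_exp_mul_sub_Iic hm, mul_one_div]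

lemma le_integral_Iic_of_exp_mul_le (hm : 0 < m) (hg : IntegrableOn g (Iic t))
    (hle : ∀ s, c * exp (m * (s - t)) ≤ g s) : c / m ≤ ∫ s in Iic t, g s := by
  have := integral_Iic_le_of_le_exp_mul (c := -c) (g := fun s => -g s) hm hg.neg fun s => by
    linarith [hle s]
  rw [integral_neg, neg_div] at this
  linarith

lemma integrableOn_Iic_of_abs_le_exp_mul (hm : 0 < m) (hg : Continuous g)
    (hle : ∀ s, |g s| ≤ c * exp (m * (s - t))) : IntegrableOn g (Iic t) :=
  ((integrableOn_exp_mul_sub_Iic hm t).const_mul c).mono' hg.aestronglyMeasurable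
    (Eventually.of_forall hle)

end DiscountedIntegral

section WeakKAM

variable {n : ℕ} {F : ℝ → ℝ} {L : Evec n → Evec n → ℝ → ℝ} {α m K : ℝ} {x : Evec n} {t : ℝ}

lemma const_curve_mem_wkSet
    (hint : IntegrableOn (fun s => exp (F s - F t) * (L x 0 s + α)) (Iic t)) :
    ∫ s in Iic t, exp (F s - F t) * (L x 0 s + α) ∈ wkSet F L α x t :=
  ⟨fun _ => x, fun _ => 0, fun _ _ _ _ => ⟨intervalIntegrable_const, by simp⟩, rfl, hint, rfl⟩

variable (hm : 0 < m) (hdisc : ∀ s, exp (F s - F t) ≤ K * exp (m * (s - t)))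
include hm hdisc

lemma le_of_mem_wkSet {C0 : ℝ} (hC0 : ∀ x v t, -C0 ≤ L x v t) :
    ∀ r ∈ wkSet F L α x t, -|C0 - α| * (K / m) ≤ r := by
  rintro r ⟨γ, γ', -, -, hint, rfl⟩
  rw [← mul_div_assoc]
  refine le_integral_Iic_of_exp_mul_le hm hint fun s => ?_
  have := hdisc s
  nlinarith [exp_pos (F s - F t), abs_nonneg (C0 - α), hC0 (γ s) (γ' s) s, le_abs_self (C0 - α)]

lemma integrableOn_const_curve_action {C0 Csup : ℝ} (hF : Continuous F)
    (hL : Continuous fun s => L x 0 s) (hC0 : ∀ s, -C0 ≤ L x 0 s) (hCsup : ∀ s, L x 0 s ≤ Csup) :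
    IntegrableOn (fun s => exp (F s - F t) * (L x 0 s + α)) (Iic t) := by
  refine integrableOn_Iic_of_abs_le_exp_mul (c := (|Csup + α| + |C0 - α|) * K) hm
    ((continuous_exp.comp (hF.sub continuous_const)).mul (hL.add continuous_const)) fun s => ?_
  have hL_abs : |L x 0 s + α| ≤ |Csup + α| + |C0 - α| := abs_le.2
    ⟨by linarith [hC0 s, le_abs_self (C0 - α), abs_nonneg (Csup + α)],
      by linarith [hCsup s, le_abs_self (Csup + α), abs_nonneg (C0 - α)]⟩
  rw [abs_mul, abs_of_pos (exp_pos _), mul_comm, mul_assoc]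
  exact mul_le_mul hL_abs (hdisc s) (exp_pos _).le (by positivity)

lemma const_curve_action_le {Csup : ℝ}
    (hint : IntegrableOn (fun s => exp (F s - F t) * (L x 0 s + α)) (Iic t))
    (hCsup : ∀ s, L x 0 s ≤ Csup) :
    ∫ s in Iic t, exp (F s - F t) * (L x 0 s + α) ≤ |Csup + α| * (K / m) := by
  rw [← mul_div_assoc]
  refine integral_Iic_le_of_le_exp_mul hm hint fun s => ?_
  have := hdisc s
  nlinarith [exp_pos (F s - F t), abs_nonneg (Csup + α), hCsup s, le_abs_self (Csup + α)]

end WeakKAM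

theorem weak_kam_well_defined_and_bounded_general
    (n : ℕ)
    (f F : ℝ → ℝ) (m k₀ : ℝ)
    (hf : Continuous f) (hfper : ∀ t, f (t + 1) = f t)
    (hm : m = ∫ t in (0:ℝ)..1, f t) (hmpos : 0 < m)
    (hF : ∀ t, F t = ∫ τ in (0:ℝ)..t, f τ)
    (hk₀ : IsGreatest ((fun s => |F s|) '' Set.Icc (0:ℝ) 2) k₀)
    (L : Evec n → Evec n → ℝ → ℝ)
    (hLsm : ContDiff ℝ 2 (fun q : Evec n × Evec n × ℝ => L q.1 q.2.1 q.2.2))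
    (α C0 Csup : ℝ)
    (hC0 : ∀ x v t, -C0 ≤ L x v t)
    (hCsup : ∀ x t, L x 0 t ≤ Csup) :
    ∀ (x : Evec n) (t : ℝ),
      (wkSet F L α x t).Nonempty ∧ BddBelow (wkSet F L α x t) ∧
      -|C0 - α| * (Real.exp (2 * k₀ + m) / m) ≤ uWK F L α x t ∧
      uWK F L α x t ≤ |Csup + α| * (Real.exp (2 * k₀ + m) / m) := by
  intro x t
  have hF_add (u : ℝ) : F (u + 1) = F u + m := by rw [hF, hF, hm, primitive_add_one hf hfper]
  have hdisc (s : ℝ) : exp (F s - F t) ≤ exp (2 * k₀ + m) * exp (m * (s - t)) := by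
    rw [← exp_add, exp_le_exp]
    exact sub_le_of_map_add_one hmpos.le hF_add
      (fun u hu => hk₀.2 ⟨u, Ico_subset_Icc_self.trans (Icc_subset_Icc_right one_le_two) hu, rfl⟩) s t
  have hF_cont : Continuous F := by
    rw [funext hF]
    exact intervalIntegral.continuous_primitive (μ := volume) (hf.intervalIntegrable · ·) 0
  have hL_cont : Continuous fun s => L x 0 s :=
    hLsm.continuous.comp (f := fun s : ℝ => (x, (0 : Evec n), s)) (by fun_prop)
  have hint := integrableOn_const_curve_action (α := α) hmpos hdisc hF_cont hL_cont (hC0 x 0)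
    (hCsup x)
  have hmem := const_curve_mem_wkSet hint
  have hlow := le_of_mem_wkSet (α := α) (x := x) hmpos hdisc hC0
  exact ⟨⟨_, hmem⟩, ⟨_, hlow⟩, le_csInf ⟨_, hmem⟩ hlow,
    (csInf_le ⟨_, hlow⟩ hmem).trans (const_curve_action_le hmpos hdisc hint (hCsup x))⟩

/-- The weak KAM solution `u_α⁻` is well defined (the set of
actions is nonempty and bounded below) and satisfies the explicit bounds
`-|C(0) - α| e^{2k₀+[f]}/[f] ≤ u_α⁻ ≤ |C₀ + α| e^{2k₀+[f]}/[f]`. -/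
theorem weak_kam_well_defined_and_bounded
    (n : ℕ) (hn : 1 ≤ n)
    (f F : ℝ → ℝ) (m k₀ : ℝ)
    (hf : Continuous f) (hfper : ∀ t, f (t + 1) = f t)
    (hm : m = ∫ t in (0:ℝ)..1, f t) (hmpos : 0 < m)
    (hF : ∀ t, F t = ∫ τ in (0:ℝ)..t, f τ)
    (hk₀ : IsGreatest ((fun s => |F s|) '' Set.Icc (0:ℝ) 2) k₀)
    (L : Evec n → Evec n → ℝ → ℝ)
    (hLsm : ContDiff ℝ 2 (fun q : Evec n × Evec n × ℝ => L q.1 q.2.1 q.2.2))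
    (hLxper : ∀ (k : Fin n → ℤ) (x v : Evec n) (t : ℝ), L (x + intVec k) v t = L x v t)
    (hLtper : ∀ (x v : Evec n) (t : ℝ), L x v (t + 1) = L x v t)
    (hLconv : ∀ (x : Evec n) (t : ℝ) (v w : Evec n), w ≠ 0 →
      0 < iteratedFDeriv ℝ 2 (fun v' => L x v' t) v ![w, w])
    (hLsuper : ∀ k : ℝ, 0 ≤ k → ∃ C : ℝ, ∀ x v t, k * ‖v‖ - C ≤ L x v t)
    (α C0 Csup : ℝ)
    (hC0 : ∀ x v t, -C0 ≤ L x v t)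
    (hCsup : ∀ x t, L x 0 t ≤ Csup) :
    ∀ (x : Evec n) (t : ℝ),
      (wkSet F L α x t).Nonempty ∧ BddBelow (wkSet F L α x t) ∧
      -|C0 - α| * (Real.exp (2 * k₀ + m) / m) ≤ uWK F L α x t ∧
      uWK F L α x t ≤ |Csup + α| * (Real.exp (2 * k₀ + m) / m) :=
  weak_kam_well_defined_and_bounded_general n f F m k₀ hf hfper hm hmpos hF hk₀ L hLsm α C0 Csup hC0
    hCsup
end
end

section
/- (Domination) For every α ∈ ℝ and every absolutely continuous curve γ : [s₁, s₂] → ℝⁿ, one has e^{F(s₂)} u_α⁻(γ(s₂), s₂) − e^{F(s₁)} u_α⁻(γ(s₁), s₁) ≤ ∫_{s₁}^{s₂} e^{F(τ)} (L(γ(τ), γ'(τ), τ) + α) dτ. -/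
open MeasureTheory Real Filter
open scoped RealInnerProductSpace

noncomputable section

/-!
Take any admissible curve `σ` ending at `γ s₁` at time `s₁` and follow `γ` from `s₁` to `s₂`:
the concatenation is admissible for `(γ s₂, s₂)`, and its discounted action is
`e^{F s₁ - F s₂}` times that of `σ` plus `e^{-F s₂} ∫_{s₁}^{s₂} e^{F} (L + α)`. Taking the infimum
over `σ` gives the inequality, provided both infima are genuine (`sInf` of an empty or unbounded
set is `0`): the constant curve is admissible because `e^{F}` is integrable on `(-∞, t]` (`F` grows
linearly with slope `[f] > 0`) and `L(x, 0, ·)` is bounded, while `L` is bounded below.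
-/

open Set Function
open scoped Interval

theorem csInf_le_mul_csInf_add {S T : Set ℝ} {A B : ℝ} (hS : S.Nonempty) (hT : BddBelow T)
    (hA : 0 < A) (h : MapsTo (fun r => A * r + B) S T) : sInf T ≤ A * sInf S + B := by
  have : (sInf T - B) / A ≤ sInf S :=
    le_csInf hS fun r hr => by
      rw [div_le_iff₀ hA]
      linarith [csInf_le hT (h hr)]
  rw [div_le_iff₀ hA] at this
  linarith

theorem Function.Periodic.integrableOn_exp_intervalIntegral_Iic {g : ℝ → ℝ} {T : ℝ}
    (hg : Periodic g T) (hT : 0 < T) (h₀ : 0 < ∫ x in 0..T, g x) (t : ℝ) :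
    IntegrableOn (fun s => exp (∫ x in 0..s, g x)) (Iic t) := by
  set m := ∫ x in 0..T, g x
  set K := sSup ((fun t => ∫ x in 0..t, g x) '' Icc 0 T)
  have h_int := intervalIntegral.intervalIntegrable_of_integral_ne_zero h₀.ne'
  have h_linear : ∀ s, ∫ x in 0..s, g x ≤ K + m / T * s := fun s => by
    have h_floor : (⌊s / T⌋ : ℝ) * m ≤ s / T * m :=
      mul_le_mul_of_nonneg_right (Int.floor_le _) h₀.le
    have := hg.integral_le_sSup_add_zsmul_of_pos h_int hT s
    rw [zsmul_eq_mul] at this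
    linarith [show s / T * m = m / T * s by ring]
  have h_meas : Continuous fun s => exp (∫ x in 0..s, g x) :=
    continuous_exp.comp (intervalIntegral.continuous_primitive (hg.intervalIntegrable₀ hT.ne' h_int) 0)
  refine ((integrableOn_exp_mul_Iic (div_pos h₀ hT) t).const_mul (exp K)).mono'
    h_meas.aestronglyMeasurable (ae_of_all _ fun s => ?_)
  rw [norm_of_nonneg (exp_pos _).le, ← exp_add]
  exact exp_le_exp.2 (h_linear s)

section AbsolutelyContinuous

variable {n : ℕ}

theorem ACOn.congr {γ γ' δ δ' : ℝ → Evec n} {S : Set ℝ} (h : ACOn γ γ' S) (hS : S.OrdConnected)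
    (hγ : EqOn γ δ S) (hγ' : ∀ᵐ x, x ∈ S → γ' x = δ' x) : ACOn δ δ' S := by
  intro a ha b hb
  obtain ⟨h_int, h_eq⟩ := h a ha b hb
  have h_ae : ∀ᵐ x, x ∈ Ι a b → γ' x = δ' x :=
    hγ'.mono fun x hx hxab => hx (uIoc_subset_uIcc.trans (hS.uIcc_subset ha hb) hxab)
  refine ⟨h_int.congr_ae ((ae_restrict_iff' measurableSet_uIoc).2 h_ae), ?_⟩
  rw [← hγ ha, ← hγ hb, h_eq, intervalIntegral.integral_congr_ae h_ae]

theorem ACOn.union {γ γ' : ℝ → Evec n} {S T : Set ℝ} {c : ℝ} (hS : ACOn γ γ' S)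
    (hT : ACOn γ γ' T) (hc : c ∈ S ∩ T) : ACOn γ γ' (S ∪ T) := by
  have to_c : ∀ a ∈ S ∪ T, IntervalIntegrable γ' volume a c ∧ γ c = γ a + ∫ τ in a..c, γ' τ := by
    rintro a (ha | ha)
    exacts [hS a ha c hc.1, hT a ha c hc.2]
  intro a ha b hb
  obtain ⟨hac, eac⟩ := to_c a ha
  obtain ⟨hbc, ebc⟩ := to_c b hb
  refine ⟨hac.trans hbc.symm, ?_⟩
  rw [← intervalIntegral.integral_add_adjacent_intervals hac hbc.symm,
    intervalIntegral.integral_symm b c,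
    ← add_assoc, ← sub_eq_add_neg, ← eac, ebc, add_sub_cancel_right]

theorem ACOn.piecewise_Iic {σ σ' γ γ' : ℝ → Evec n} {a b : ℝ} (hab : a ≤ b)
    (hσ : ACOn σ σ' (Iic a)) (hγ : ACOn γ γ' (Icc a b)) (ha : σ a = γ a) :
    ACOn ((Iic a).piecewise σ γ) ((Iic a).piecewise σ' γ') (Iic b) := by
  rw [← Iic_union_Icc_eq_Iic hab]
  refine ACOn.union (c := a) ?_ ?_ ⟨self_mem_Iic, left_mem_Icc.2 hab⟩
  · exact hσ.congr ordConnected_Iic (piecewise_eqOn _ _ _).symm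
      (ae_of_all _ fun x hx => (piecewise_eqOn _ _ _ hx).symm)
  · refine hγ.congr ordConnected_Icc (fun x hx => ?_) ?_
    · rcases hx.1.eq_or_lt with rfl | hax
      · simp [ha]
      · simp [piecewise, not_le.2 hax]
    · filter_upwards [volume.ae_ne a] with x hxa hx
      simp [piecewise, not_le.2 (hx.1.lt_of_ne' hxa)]

end AbsolutelyContinuous

section Action

variable {n : ℕ} {F : ℝ → ℝ} {L : Evec n → Evec n → ℝ → ℝ} {α : ℝ}

theorem wkSet_bddBelow {x : Evec n} {t C : ℝ}
    (hexp : IntegrableOn (fun s => exp (F s - F t)) (Iic t)) (hC : ∀ x v s, C ≤ L x v s) :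
    BddBelow (wkSet F L α x t) := by
  refine ⟨∫ s in Iic t, exp (F s - F t) * (C + α), ?_⟩
  rintro r ⟨σ, σ', -, -, h_int, rfl⟩
  refine setIntegral_mono_on (hexp.mul_const _) h_int measurableSet_Iic fun s _ => ?_
  gcongr
  exact hC _ _ _

theorem wkSet_nonempty {x : Evec n} {t : ℝ}
    (hexp : IntegrableOn (fun s => exp (F s - F t)) (Iic t))
    (hL : Continuous fun s => L x 0 s) (hLper : Periodic (fun s => L x 0 s) 1) :
    (wkSet F L α x t).Nonempty := by
  obtain ⟨K, hK⟩ := isBounded_iff_forall_norm_le.1 (hLper.isBounded_of_continuous one_ne_zero hL)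
  have h_int : IntegrableOn (fun s => exp (F s - F t) * (L x 0 s + α)) (Iic t) :=
    hexp.mul_bdd (hL.add continuous_const).aestronglyMeasurable
      (ae_of_all _ fun s => (norm_add_le _ _).trans (add_le_add (hK _ (mem_range_self s)) le_rfl))
  exact ⟨_, fun _ => x, fun _ => 0, fun a _ b _ => ⟨intervalIntegrable_const, by simp⟩, rfl,
    h_int, rfl⟩

theorem exp_mul_add_mem_wkSet {γ γ' : ℝ → Evec n} {s₁ s₂ r : ℝ} (h₁₂ : s₁ ≤ s₂)
    (hγ : ACOn γ γ' (Icc s₁ s₂))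
    (hγ_int : IntegrableOn (fun τ => exp (F τ) * (L (γ τ) (γ' τ) τ + α)) (Ioc s₁ s₂))
    (hr : r ∈ wkSet F L α (γ s₁) s₁) :
    exp (F s₁ - F s₂) * r + exp (-F s₂) * ∫ τ in s₁..s₂, exp (F τ) * (L (γ τ) (γ' τ) τ + α) ∈
      wkSet F L α (γ s₂) s₂ := by
  obtain ⟨σ, σ', hσ, hσ_end, hσ_int, rfl⟩ := hr
  set δ := (Iic s₁).piecewise σ γ
  set δ' := (Iic s₁).piecewise σ' γ'
  have hδ : ACOn δ δ' (Iic s₂) := hσ.piecewise_Iic h₁₂ hγ hσ_end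
  set action := fun s => exp (F s - F s₂) * (L (δ s) (δ' s) s + α)
  have h_past : EqOn action
      (fun s => exp (F s₁ - F s₂) * (exp (F s - F s₁) * (L (σ s) (σ' s) s + α))) (Iic s₁) := by
    intro s hs
    simp only [action, δ, δ', piecewise_eq_of_mem _ _ _ hs, ← mul_assoc, ← exp_add]
    ring_nf
  have h_future : EqOn action
      (fun s => exp (-F s₂) * (exp (F s) * (L (γ s) (γ' s) s + α))) (Ioc s₁ s₂) := by
    intro s hs
    have hs' : s ∉ Iic s₁ := not_le.2 hs.1
    simp only [action, δ, δ', piecewise_eq_of_notMem _ _ _ hs', ← mul_assoc, ← exp_add]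
    ring_nf
  have h_past_int : IntegrableOn action (Iic s₁) :=
    IntegrableOn.congr_fun (hσ_int.const_mul _) h_past.symm measurableSet_Iic
  have h_future_int : IntegrableOn action (Ioc s₁ s₂) :=
    IntegrableOn.congr_fun (hγ_int.const_mul _) h_future.symm measurableSet_Ioc
  refine ⟨δ, δ', hδ, ?_, ?_, ?_⟩
  · simp only [δ, piecewise]
    split_ifs with h
    · rw [le_antisymm h h₁₂, hσ_end]
    · rfl
  · rw [← Iic_union_Ioc_eq_Iic h₁₂]
    exact h_past_int.union h_future_int
  · rw [← Iic_union_Ioc_eq_Iic h₁₂,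
      setIntegral_union (Iic_disjoint_Ioc le_rfl) measurableSet_Ioc h_past_int h_future_int,
      setIntegral_congr_fun measurableSet_Iic h_past, setIntegral_congr_fun measurableSet_Ioc h_future,
      integral_const_mul, integral_const_mul, intervalIntegral.integral_of_le h₁₂]

end Action

theorem weak_kam_domination_general
    (n : ℕ)
    (f F : ℝ → ℝ)
    (hfper : ∀ t, f (t + 1) = f t)
    (hfmean : 0 < ∫ t in (0:ℝ)..1, f t)
    (hF : ∀ t, F t = ∫ τ in (0:ℝ)..t, f τ)
    (L : Evec n → Evec n → ℝ → ℝ)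
    (hLsm : ContDiff ℝ 2 (fun q : Evec n × Evec n × ℝ => L q.1 q.2.1 q.2.2))
    (hLtper : ∀ (x v : Evec n) (t : ℝ), L x v (t + 1) = L x v t)
    (hLsuper : ∀ k : ℝ, 0 ≤ k → ∃ C : ℝ, ∀ x v t, k * ‖v‖ - C ≤ L x v t)
    (α : ℝ) :
    ∀ (s₁ s₂ : ℝ), s₁ ≤ s₂ → ∀ (γ γ' : ℝ → Evec n),
      ACOn γ γ' (Set.Icc s₁ s₂) →
      IntervalIntegrable (fun τ => Real.exp (F τ) * (L (γ τ) (γ' τ) τ + α))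
        MeasureTheory.volume s₁ s₂ →
      Real.exp (F s₂) * uWK F L α (γ s₂) s₂ - Real.exp (F s₁) * uWK F L α (γ s₁) s₁ ≤
        ∫ τ in s₁..s₂, Real.exp (F τ) * (L (γ τ) (γ' τ) τ + α) := by
  intro s₁ s₂ h₁₂ γ γ' hγ hγ_int
  have hexp (t : ℝ) : IntegrableOn (fun s => exp (F s - F t)) (Iic t) := by
    have h_prim : IntegrableOn (fun s => exp (∫ τ in 0..s, f τ) / exp (F t)) (Iic t) :=
      (Periodic.integrableOn_exp_intervalIntegral_Iic hfper one_pos hfmean t).div_const _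
    simpa only [exp_sub, hF] using h_prim
  obtain ⟨C, hC⟩ := hLsuper 0 le_rfl
  have h_bdd (x : Evec n) (t : ℝ) : BddBelow (wkSet F L α x t) :=
    wkSet_bddBelow (hexp t) (C := -C) fun x v s => by simpa using hC x v s
  have h_ne (x : Evec n) (t : ℝ) : (wkSet F L α x t).Nonempty :=
    wkSet_nonempty (hexp t) (hLsm.continuous.comp (continuous_const.prodMk (continuous_const.prodMk continuous_id))) fun s => hLtper x 0 s
  have key := csInf_le_mul_csInf_add (h_ne (γ s₁) s₁) (h_bdd (γ s₂) s₂) (exp_pos _)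
    fun r hr => exp_mul_add_mem_wkSet h₁₂ hγ
      ((intervalIntegrable_iff_integrableOn_Ioc_of_le h₁₂).1 hγ_int) hr
  have h_scale := mul_le_mul_of_nonneg_left key (exp_pos (F s₂)).le
  rw [mul_add, ← mul_assoc, ← mul_assoc, ← exp_add, ← exp_add, add_sub_cancel, add_neg_cancel,
    exp_zero, one_mul] at h_scale
  exact sub_le_iff_le_add'.2 h_scale

/-- **Domination.** Along every absolutely continuous curve
`γ : [s₁,s₂] → ℝⁿ` (with integrable action), one has
`e^{F(s₂)} u_α⁻(γ(s₂),s₂) - e^{F(s₁)} u_α⁻(γ(s₁),s₁) ≤ ∫_{s₁}^{s₂} e^{F} (L + α)`. -/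
theorem weak_kam_domination
    (n : ℕ) (hn : 1 ≤ n)
    (f F : ℝ → ℝ)
    (hf : Continuous f) (hfper : ∀ t, f (t + 1) = f t)
    (hfmean : 0 < ∫ t in (0:ℝ)..1, f t)
    (hF : ∀ t, F t = ∫ τ in (0:ℝ)..t, f τ)
    (L : Evec n → Evec n → ℝ → ℝ)
    (hLsm : ContDiff ℝ 2 (fun q : Evec n × Evec n × ℝ => L q.1 q.2.1 q.2.2))
    (hLxper : ∀ (k : Fin n → ℤ) (x v : Evec n) (t : ℝ), L (x + intVec k) v t = L x v t)
    (hLtper : ∀ (x v : Evec n) (t : ℝ), L x v (t + 1) = L x v t)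
    (hLconv : ∀ (x : Evec n) (t : ℝ) (v w : Evec n), w ≠ 0 →
      0 < iteratedFDeriv ℝ 2 (fun v' => L x v' t) v ![w, w])
    (hLsuper : ∀ k : ℝ, 0 ≤ k → ∃ C : ℝ, ∀ x v t, k * ‖v‖ - C ≤ L x v t)
    (α : ℝ) :
    ∀ (s₁ s₂ : ℝ), s₁ ≤ s₂ → ∀ (γ γ' : ℝ → Evec n),
      ACOn γ γ' (Set.Icc s₁ s₂) →
      IntervalIntegrable (fun τ => Real.exp (F τ) * (L (γ τ) (γ' τ) τ + α))
        MeasureTheory.volume s₁ s₂ →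
      Real.exp (F s₂) * uWK F L α (γ s₂) s₂ - Real.exp (F s₁) * uWK F L α (γ s₁) s₁ ≤
        ∫ τ in s₁..s₂, Real.exp (F τ) * (L (γ τ) (γ' τ) τ + α) :=
  weak_kam_domination_general n f F hfper hfmean hF L hLsm hLtper hLsuper α
end
end

section
/- (Convergence of finite-horizon minimal actions) For α ∈ ℝ, s < t and z, x ∈ ℝⁿ define h_α^{s,t}(z,x) := inf { ∫_s^t e^{F(τ)} (L(γ(τ),γ'(τ),τ) + α) dτ : γ : [s,t] → ℝⁿ absolutely continuous, γ(s) − z ∈ ℤⁿ, γ(t) = x }. Then h_α^{s,t}(z,x) → e^{F(t)} u_α⁻(x,t) as s → −∞, uniformly in the other variables: sup { |h_α^{s,t}(z,x) − e^{F(t)} u_α⁻(x,t)| : z, x ∈ ℝⁿ, t ≥ s + 1 } → 0 as s → −∞. -/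
/-!
Let `T b = ∫_{-∞}^b e^{F}`. Since `f` has positive mean `m`, `F τ ≤ m τ + B`, so `T b` is finite
and tends to `0` as `b → -∞`. The Lagrangian is bounded below, and, by periodicity and
compactness, bounded above on velocities in the unit cube; let `D` bound `|L + α|` there.
Extending a curve on `[s, t]` by resting at `γ s` before time `s` produces a competitor for
`u_α⁻(x, t)` costing at most `D T s` more. Conversely, replacing a competitor for `u_α⁻(x, t)` on
`[s, s + 1]` by the segment from a `ℤⁿ`-translate of `z` to `γ (s + 1)`, whose velocity lies in the
unit cube, costs at most `2 D T (s + 1)` more. Hence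
`|h_α^{s,t}(z, x) - e^{F t} u_α⁻(x, t)| ≤ 2 D T (s + 1) → 0`.
-/

open MeasureTheory Real Filter
open scoped RealInnerProductSpace

noncomputable section

/-- The finite-horizon minimal action `h_α^{s,t}(z,x)`: infimum of
`∫_s^t e^{F(τ)} (L + α)` over absolutely continuous curves on `[s,t]` ending at
`x` and starting at a `ℤⁿ`-translate of `z`. -/
def hAct {n : ℕ} (F : ℝ → ℝ) (L : Evec n → Evec n → ℝ → ℝ) (α : ℝ)
    (s t : ℝ) (z x : Evec n) : ℝ :=
  sInf { r | ∃ γ γ' : ℝ → Evec n, ACOn γ γ' (Set.Icc s t) ∧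
      (∃ k : Fin n → ℤ, γ s = z + intVec k) ∧ γ t = x ∧
      IntervalIntegrable (fun τ => Real.exp (F τ) * (L (γ τ) (γ' τ) τ + α))
        MeasureTheory.volume s t ∧
      r = ∫ τ in s..t, Real.exp (F τ) * (L (γ τ) (γ' τ) τ + α) }

open Set Function
open scoped Interval

section AbsolutelyContinuous

variable {n : ℕ} {γ γ' : ℝ → Evec n} {S : Set ℝ}

lemma ACOn.mono {T : Set ℝ} (h : ACOn γ γ' S) (hTS : T ⊆ S) : ACOn γ γ' T :=
  fun a ha b hb => h a (hTS ha) b (hTS hb)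

lemma ACOn.const (p : Evec n) (S : Set ℝ) : ACOn (fun _ => p) (fun _ => 0) S :=
  fun _ _ _ _ => ⟨intervalIntegrable_const, by simp⟩

lemma ACOn.affine (p d : Evec n) (s : ℝ) (S : Set ℝ) :
    ACOn (fun τ => p + (τ - s) • d) (fun _ => d) S := by
  refine fun a _ b _ => ⟨intervalIntegrable_const, ?_⟩
  rw [intervalIntegral.integral_const]
  module

lemma ACOn.of_basepoint {c : ℝ}
    (h : ∀ b ∈ S, IntervalIntegrable γ' volume c b ∧ γ b = γ c + ∫ τ in c..b, γ' τ) :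
    ACOn γ γ' S := by
  intro a ha b hb
  obtain ⟨hca, hγa⟩ := h a ha
  obtain ⟨hcb, hγb⟩ := h b hb
  refine ⟨hca.symm.trans hcb, ?_⟩
  rw [hγb, hγa, ← intervalIntegral.integral_interval_sub_left hcb hca]
  abel

lemma ACOn.piecewise {γ₁ γ₁' γ₂ γ₂' : ℝ → Evec n} {c : ℝ} (hc : c ∈ S)
    (h₁ : ACOn γ₁ γ₁' (S ∩ Iic c)) (h₂ : ACOn γ₂ γ₂' (S ∩ Ici c)) (hγc : γ₁ c = γ₂ c) :
    ACOn (fun τ => if τ ≤ c then γ₁ τ else γ₂ τ)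
      (fun τ => if τ ≤ c then γ₁' τ else γ₂' τ) S := by
  set glued := fun τ => if τ ≤ c then γ₁ τ else γ₂ τ
  set glued' := fun τ => if τ ≤ c then γ₁' τ else γ₂' τ
  have transfer : ∀ {b : ℝ} {g g' : ℝ → Evec n},
      IntervalIntegrable g' volume c b ∧ g b = g c + ∫ τ in c..b, g' τ →
      glued b = g b → glued c = g c → EqOn g' glued' (Ι c b) →
      IntervalIntegrable glued' volume c b ∧ glued b = glued c + ∫ τ in c..b, glued' τ := by
    rintro b g g' ⟨hint, hg⟩ hb hc hEq
    refine ⟨hint.congr hEq, ?_⟩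
    rw [hb, hc, hg, intervalIntegral.integral_congr_ae (ae_of_all _ fun τ hτ => hEq hτ)]
  refine ACOn.of_basepoint (c := c) fun b hb => ?_
  rcases le_or_gt b c with hbc | hcb
  · refine transfer (h₁ c ⟨hc, self_mem_Iic⟩ b ⟨hb, hbc⟩) (if_pos hbc) (if_pos le_rfl) ?_
    intro τ hτ
    rw [uIoc_of_ge hbc] at hτ
    exact (if_pos hτ.2).symm
  · refine transfer (h₂ c ⟨hc, self_mem_Ici⟩ b ⟨hb, hcb.le⟩) (if_neg hcb.not_ge)
      ((if_pos le_rfl).trans hγc) ?_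
    intro τ hτ
    rw [uIoc_of_le hcb.le] at hτ
    exact (if_neg hτ.1.not_ge).symm

end AbsolutelyContinuous

def unitCube (n : ℕ) : Set (Evec n) := {y | ∀ i, y i ∈ Icc (0 : ℝ) 1}

lemma zero_mem_unitCube (n : ℕ) : (0 : Evec n) ∈ unitCube n := fun _ => by simp

lemma isCompact_unitCube (n : ℕ) : IsCompact (unitCube n) := by
  have : unitCube n = WithLp.toLp 2 '' univ.pi (fun _ => Icc (0 : ℝ) 1) := by
    ext y
    refine ⟨fun hy => ⟨WithLp.ofLp y, fun i _ => hy i, rfl⟩, ?_⟩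
    rintro ⟨y, hy, rfl⟩ i
    exact hy i trivial
  rw [this]
  exact (isCompact_univ_pi fun _ => isCompact_Icc).image (PiLp.continuous_toLp 2 _)

lemma exists_sub_intVec_mem_unitCube {n : ℕ} (y : Evec n) :
    ∃ k : Fin n → ℤ, y - intVec k ∈ unitCube n := by
  refine ⟨fun i => ⌊y i⌋, fun i => ?_⟩
  simp only [intVec, PiLp.sub_apply, Int.self_sub_floor]
  exact ⟨Int.fract_nonneg _, (Int.fract_lt_one _).le⟩

lemma exists_forall_le_of_periodic {n : ℕ} {L : Evec n → Evec n → ℝ → ℝ}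
    (hL : Continuous (fun q : Evec n × Evec n × ℝ => L q.1 q.2.1 q.2.2))
    (hLx : ∀ (k : Fin n → ℤ) (x v : Evec n) (t : ℝ), L (x + intVec k) v t = L x v t)
    (hLt : ∀ (x v : Evec n) (t : ℝ), L x v (t + 1) = L x v t)
    {K : Set (Evec n)} (hK : IsCompact K) :
    ∃ M, ∀ x, ∀ v ∈ K, ∀ t, L x v t ≤ M := by
  obtain ⟨M, hM⟩ := ((isCompact_unitCube n).prod (hK.prod isCompact_Icc)).image hL |>.bddAbove
  refine ⟨M, fun x v hv t => ?_⟩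
  obtain ⟨k, hk⟩ := exists_sub_intVec_mem_unitCube x
  have hreduce : L x v t = L (x - intVec k) v (Int.fract t) := by
    rw [← Int.self_sub_floor, ← mul_one (⌊t⌋ : ℝ),
      Periodic.sub_int_mul_eq (f := L (x - intVec k) v) (hLt _ _), ← hLx k (x - intVec k),
      sub_add_cancel]
  rw [hreduce]
  exact hM ⟨(_, v, _), ⟨hk, hv, Int.fract_nonneg t, (Int.fract_lt_one t).le⟩, rfl⟩

lemma exists_primitive_le_of_periodic {f : ℝ → ℝ} (hf : Continuous f) (hper : Periodic f 1) :
    ∃ B, ∀ u, ∫ τ in (0 : ℝ)..u, f τ ≤ (∫ τ in (0 : ℝ)..1, f τ) * u + B := by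
  set m := ∫ τ in (0 : ℝ)..1, f τ
  have hcont : Continuous fun u => (∫ τ in (0 : ℝ)..u, f τ) - m * u :=
    (intervalIntegral.continuous_primitive (fun a b => hf.intervalIntegrable a b) 0).sub
      (continuous_const.mul continuous_id)
  have hper' : Periodic (fun u => (∫ τ in (0 : ℝ)..u, f τ) - m * u) 1 := by
    intro u
    simp only [hper.intervalIntegral_add_eq_add 0 u (fun a b => hf.intervalIntegrable a b),
      zero_add, m]
    ring
  obtain ⟨B, hB⟩ := (hper'.isBounded_of_continuous one_ne_zero hcont).bddAbove
  exact ⟨B, fun u => by linarith [hB (mem_range_self u)]⟩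

lemma integrableOn_exp_primitive_Iic {f : ℝ → ℝ} (hf : Continuous f) (hper : Periodic f 1)
    (hmean : 0 < ∫ τ in (0 : ℝ)..1, f τ) (b : ℝ) :
    IntegrableOn (fun u => exp (∫ τ in (0 : ℝ)..u, f τ)) (Iic b) := by
  obtain ⟨B, hB⟩ := exists_primitive_le_of_periodic hf hper
  refine ((integrableOn_exp_mul_Iic hmean b).const_mul (exp B)).mono'
    ((intervalIntegral.continuous_primitive (fun a b => hf.intervalIntegrable a b) 0).rexp
      |>.aestronglyMeasurable) (ae_of_all _ fun u => ?_)
  rw [norm_of_nonneg (exp_pos _).le, ← exp_add]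
  exact exp_le_exp.2 (by linarith [hB u])

lemma integrableOn_Iic_of_intervalIntegrable {g : ℝ → ℝ} {s t : ℝ} (hst : s ≤ t)
    (hs : IntegrableOn g (Iic s)) (hg : IntervalIntegrable g volume s t) :
    IntegrableOn g (Iic t) := by
  rw [← Iic_union_Ioc_eq_Iic hst]
  exact hs.union ((intervalIntegrable_iff_integrableOn_Ioc_of_le hst).1 hg)

lemma csInf_le_mul_csInf_add_s10 {X Y : Set ℝ} {a c : ℝ} (ha : 0 < a) (hX : BddBelow X)
    (hY : Y.Nonempty) (h : ∀ y ∈ Y, ∃ x ∈ X, x ≤ a * y + c) : sInf X ≤ a * sInf Y + c := by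
  have : (sInf X - c) / a ≤ sInf Y := le_csInf hY fun y hy => by
    obtain ⟨x, hx, hxy⟩ := h y hy
    rw [div_le_iff₀' ha]
    linarith [csInf_le hX hx]
  rw [div_le_iff₀' ha] at this
  linarith

lemma mul_csInf_le_csInf_add {X Y : Set ℝ} {a c : ℝ} (ha : 0 ≤ a) (hY : BddBelow Y)
    (hX : X.Nonempty) (h : ∀ x ∈ X, ∃ y ∈ Y, a * y ≤ x + c) : a * sInf Y ≤ sInf X + c := by
  have : a * sInf Y - c ≤ sInf X := le_csInf hX fun x hx => by
    obtain ⟨y, hy, hyx⟩ := h x hx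
    linarith [mul_le_mul_of_nonneg_left (csInf_le hY hy) ha]
  linarith

section Action

variable {n : ℕ} {F : ℝ → ℝ} {L : Evec n → Evec n → ℝ → ℝ} {α D : ℝ}

def actionDensity (F : ℝ → ℝ) (L : Evec n → Evec n → ℝ → ℝ) (α : ℝ) (γ γ' : ℝ → Evec n)
    (τ : ℝ) : ℝ :=
  exp (F τ) * (L (γ τ) (γ' τ) τ + α)

def finiteActions (F : ℝ → ℝ) (L : Evec n → Evec n → ℝ → ℝ) (α s t : ℝ) (z x : Evec n) :
    Set ℝ :=
  {r | ∃ γ γ' : ℝ → Evec n, ACOn γ γ' (Icc s t) ∧ (∃ k, γ s = z + intVec k) ∧ γ t = x ∧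
    IntervalIntegrable (actionDensity F L α γ γ') volume s t ∧
    r = ∫ τ in s..t, actionDensity F L α γ γ' τ}

lemma hAct_eq_sInf_finiteActions {s t : ℝ} {z x : Evec n} :
    hAct F L α s t z x = sInf (finiteActions F L α s t z x) := rfl

lemma mem_wkSet_iff {x : Evec n} {t r : ℝ} :
    r ∈ wkSet F L α x t ↔ ∃ γ γ' : ℝ → Evec n, ACOn γ γ' (Iic t) ∧ γ t = x ∧
      IntegrableOn (actionDensity F L α γ γ') (Iic t) ∧
      exp (F t) * r = ∫ τ in Iic t, actionDensity F L α γ γ' τ := by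
  have hdiscount : ∀ γ γ' : ℝ → Evec n,
      (fun τ => exp (F τ - F t) * (L (γ τ) (γ' τ) τ + α)) =
        fun τ => (exp (F t))⁻¹ * actionDensity F L α γ γ' τ := fun γ γ' => by
    ext τ
    rw [actionDensity, exp_sub]
    ring
  simp only [wkSet, mem_ofPred_eq, hdiscount, IntegrableOn,
    integrable_const_mul_iff (exp_pos _).ne'.isUnit.inv, integral_const_mul,
    eq_inv_mul_iff_mul_eq₀ (exp_pos _).ne']

lemma continuous_actionDensity (hF : Continuous F)
    (hL : Continuous (fun q : Evec n × Evec n × ℝ => L q.1 q.2.1 q.2.2))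
    {γ γ' : ℝ → Evec n} (hγ : Continuous γ) (hγ' : Continuous γ') :
    Continuous (actionDensity F L α γ γ') :=
  hF.rexp.mul ((hL.comp (hγ.prodMk (hγ'.prodMk continuous_id))).add continuous_const)

lemma neg_mul_le_setIntegral_actionDensity (hD : 0 ≤ D) (hlow : ∀ x v τ, -D ≤ L x v τ + α)
    {b : ℝ} (hexp : IntegrableOn (fun τ => exp (F τ)) (Iic b)) {S : Set ℝ}
    (hS : MeasurableSet S) (hSb : S ⊆ Iic b) {γ γ' : ℝ → Evec n}
    (hint : IntegrableOn (actionDensity F L α γ γ') S) :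
    -(D * ∫ τ in Iic b, exp (F τ)) ≤ ∫ τ in S, actionDensity F L α γ γ' τ := by
  calc -(D * ∫ τ in Iic b, exp (F τ))
      ≤ -(D * ∫ τ in S, exp (F τ)) := by
        gcongr
        exact ae_of_all _ fun τ => (exp_pos _).le
    _ = ∫ τ in S, -D * exp (F τ) := by rw [integral_const_mul, neg_mul]
    _ ≤ _ := setIntegral_mono_on ((hexp.mono_set hSb).const_mul _) hint hS fun τ _ => by
        rw [actionDensity, mul_comm]
        exact mul_le_mul_of_nonneg_left (hlow _ _ _) (exp_pos _).le

lemma setIntegral_actionDensity_le_mul (hD : 0 ≤ D)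
    (hup : ∀ x, ∀ v ∈ unitCube n, ∀ τ, L x v τ + α ≤ D)
    {b : ℝ} (hexp : IntegrableOn (fun τ => exp (F τ)) (Iic b)) {S : Set ℝ}
    (hS : MeasurableSet S) (hSb : S ⊆ Iic b) {γ γ' : ℝ → Evec n}
    (hv : ∀ τ ∈ S, γ' τ ∈ unitCube n) (hint : IntegrableOn (actionDensity F L α γ γ') S) :
    ∫ τ in S, actionDensity F L α γ γ' τ ≤ D * ∫ τ in Iic b, exp (F τ) := by
  calc ∫ τ in S, actionDensity F L α γ γ' τ
      ≤ ∫ τ in S, D * exp (F τ) :=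
        setIntegral_mono_on hint ((hexp.mono_set hSb).const_mul _) hS fun τ hτ => by
          rw [actionDensity, mul_comm D]
          exact mul_le_mul_of_nonneg_left (hup _ _ (hv τ hτ) _) (exp_pos _).le
    _ = D * ∫ τ in S, exp (F τ) := integral_const_mul _ _
    _ ≤ D * ∫ τ in Iic b, exp (F τ) := by
        gcongr
        exact ae_of_all _ fun τ => (exp_pos _).le


structure ActionBounds (F : ℝ → ℝ) (L : Evec n → Evec n → ℝ → ℝ) (α D : ℝ) : Prop where
  continuous_F : Continuous F
  continuous_L : Continuous (fun q : Evec n × Evec n × ℝ => L q.1 q.2.1 q.2.2)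
  lower : ∀ x v τ, -D ≤ L x v τ + α
  upper : ∀ x, ∀ v ∈ unitCube n, ∀ τ, L x v τ + α ≤ D
  integrableOn_exp : ∀ b, IntegrableOn (fun τ => exp (F τ)) (Iic b)

lemma ActionBounds.nonneg (h : ActionBounds F L α D) : 0 ≤ D := by
  linarith [h.lower 0 0 0, h.upper 0 0 (zero_mem_unitCube n) 0]

lemma ActionBounds.integrableOn_actionDensity_const (h : ActionBounds F L α D) (p : Evec n)
    (b : ℝ) : IntegrableOn (actionDensity F L α (fun _ => p) (fun _ => 0)) (Iic b) := by
  refine ((h.integrableOn_exp b).const_mul D).mono'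
    (continuous_actionDensity h.continuous_F h.continuous_L continuous_const
      continuous_const).aestronglyMeasurable (ae_of_all _ fun τ => ?_)
  rw [actionDensity, Real.norm_eq_abs, abs_mul, abs_of_pos (exp_pos _), mul_comm D]
  exact mul_le_mul_of_nonneg_left
    (abs_le.2 ⟨h.lower _ _ _, h.upper _ _ (zero_mem_unitCube n) _⟩) (exp_pos _).le

lemma ActionBounds.wkSet_nonempty (h : ActionBounds F L α D) (x : Evec n) (t : ℝ) :
    (wkSet F L α x t).Nonempty :=
  ⟨_, mem_wkSet_iff.2 ⟨fun _ => x, fun _ => 0, ACOn.const x _, rfl,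
    h.integrableOn_actionDensity_const x t, mul_inv_cancel_left₀ (exp_pos _).ne' _⟩⟩

lemma ActionBounds.bddBelow_wkSet (h : ActionBounds F L α D) (x : Evec n) (t : ℝ) :
    BddBelow (wkSet F L α x t) := by
  refine ⟨-(D * ∫ τ in Iic t, exp (F τ)) / exp (F t), fun r hr => ?_⟩
  obtain ⟨γ, γ', -, -, hint, hr⟩ := mem_wkSet_iff.1 hr
  rw [div_le_iff₀ (exp_pos _), mul_comm r, hr]
  exact neg_mul_le_setIntegral_actionDensity h.nonneg h.lower (h.integrableOn_exp t)
    measurableSet_Iic subset_rfl hint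

lemma ActionBounds.bddBelow_finiteActions (h : ActionBounds F L α D) {s t : ℝ} (hst : s ≤ t)
    (z x : Evec n) : BddBelow (finiteActions F L α s t z x) := by
  refine ⟨-(D * ∫ τ in Iic t, exp (F τ)), ?_⟩
  rintro _ ⟨γ, γ', -, -, -, hint, rfl⟩
  rw [intervalIntegral.integral_of_le hst]
  exact neg_mul_le_setIntegral_actionDensity h.nonneg h.lower (h.integrableOn_exp t)
    measurableSet_Ioc Ioc_subset_Iic_self
    ((intervalIntegrable_iff_integrableOn_Ioc_of_le hst).1 hint)

lemma ActionBounds.exists_mem_wkSet_le (h : ActionBounds F L α D) {s t : ℝ} (hst : s ≤ t)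
    {z x : Evec n} {ρ : ℝ} (hρ : ρ ∈ finiteActions F L α s t z x) :
    ∃ r ∈ wkSet F L α x t, exp (F t) * r ≤ ρ + D * ∫ τ in Iic s, exp (F τ) := by
  obtain ⟨γ, γ', hac, -, hγt, hint, rfl⟩ := hρ
  set γc : ℝ → Evec n := fun τ => if τ ≤ s then γ s else γ τ
  set γc' : ℝ → Evec n := fun τ => if τ ≤ s then 0 else γ' τ
  have hrest : EqOn (actionDensity F L α γc γc')
      (actionDensity F L α (fun _ => γ s) (fun _ => 0)) (Iic s) := fun τ hτ => by
    simp only [actionDensity, γc, γc', if_pos (mem_Iic.1 hτ)]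
  have hmove : EqOn (actionDensity F L α γc γc') (actionDensity F L α γ γ') (Ι s t) :=
    fun τ hτ => by
      rw [uIoc_of_le hst] at hτ
      simp only [actionDensity, γc, γc', if_neg hτ.1.not_ge]
  have hint_rest : IntegrableOn (actionDensity F L α γc γc') (Iic s) :=
    (h.integrableOn_actionDensity_const (γ s) s).congr_fun hrest.symm measurableSet_Iic
  have hint_all : IntegrableOn (actionDensity F L α γc γc') (Iic t) :=
    integrableOn_Iic_of_intervalIntegrable hst hint_rest (hint.congr hmove.symm)
  have hac' : ACOn γc γc' (Iic t) :=
    ACOn.piecewise hst (ACOn.const _ _) (hac.mono fun τ hτ => ⟨hτ.2, hτ.1⟩) rfl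
  have hend : γc t = x := by
    change (if t ≤ s then γ s else γ t) = x
    split_ifs with hts
    · obtain rfl := le_antisymm hts hst
      exact hγt
    · exact hγt
  refine ⟨(exp (F t))⁻¹ * ∫ τ in Iic t, actionDensity F L α γc γc' τ,
    mem_wkSet_iff.2 ⟨γc, γc', hac', hend, hint_all, mul_inv_cancel_left₀ (exp_pos _).ne' _⟩, ?_⟩
  have hrest_le : ∫ τ in Iic s, actionDensity F L α γc γc' τ ≤ D * ∫ τ in Iic s, exp (F τ) :=
    setIntegral_actionDensity_le_mul h.nonneg h.upper (h.integrableOn_exp s) measurableSet_Iic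
      subset_rfl (fun τ hτ => by simp only [γc', if_pos (mem_Iic.1 hτ), zero_mem_unitCube])
      hint_rest
  have hsplit := intervalIntegral.integral_Iic_sub_Iic hint_rest hint_all
  rw [intervalIntegral.integral_congr_ae (ae_of_all _ fun τ hτ => hmove hτ)] at hsplit
  rw [mul_inv_cancel_left₀ (exp_pos _).ne']
  linarith

lemma ActionBounds.exists_mem_finiteActions_le (h : ActionBounds F L α D) {s t : ℝ}
    (hst : s + 1 ≤ t) (z : Evec n) {x : Evec n} {r : ℝ} (hr : r ∈ wkSet F L α x t) :
    ∃ ρ ∈ finiteActions F L α s t z x,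
      ρ ≤ exp (F t) * r + 2 * D * ∫ τ in Iic (s + 1), exp (F τ) := by
  obtain ⟨γ, γ', hac, hγt, hint, hr⟩ := mem_wkSet_iff.1 hr
  obtain ⟨k, hk⟩ := exists_sub_intVec_mem_unitCube (γ (s + 1) - z)
  set p := z + intVec k
  set d := γ (s + 1) - p
  have hd : d ∈ unitCube n := by rwa [← sub_add_eq_sub_sub] at hk
  set γh : ℝ → Evec n := fun τ => if τ ≤ s + 1 then p + (τ - s) • d else γ τ
  set γh' : ℝ → Evec n := fun τ => if τ ≤ s + 1 then d else γ' τ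
  have hjoin : p + (s + 1 - s) • d = γ (s + 1) := by
    rw [add_sub_cancel_left, one_smul, add_sub_cancel]
  have hac' : ACOn γh γh' (Icc s t) :=
    ACOn.piecewise ⟨by linarith, hst⟩ (ACOn.affine p d s _) (hac.mono fun τ hτ => hτ.1.2) hjoin
  have hstart : γh s = z + intVec k := by
    change (if s ≤ s + 1 then p + (s - s) • d else γ s) = _
    rw [if_pos (by linarith), sub_self, zero_smul, add_zero]
  have hend : γh t = x := by
    change (if t ≤ s + 1 then p + (t - s) • d else γ t) = x
    split_ifs with hts
    · obtain rfl := le_antisymm hts hst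
      rw [hjoin, hγt]
    · exact hγt
  have hseg : EqOn (actionDensity F L α γh γh')
      (actionDensity F L α (fun τ => p + (τ - s) • d) (fun _ => d)) (Ι s (s + 1)) :=
    fun τ hτ => by
      rw [uIoc_of_le (by linarith)] at hτ
      simp only [actionDensity, γh, γh', if_pos hτ.2]
  have hfollow : EqOn (actionDensity F L α γh γh') (actionDensity F L α γ γ') (Ι (s + 1) t) :=
    fun τ hτ => by
      rw [uIoc_of_le hst] at hτ
      simp only [actionDensity, γh, γh', if_neg hτ.1.not_ge]
  have hseg_cont : Continuous (actionDensity F L α (fun τ => p + (τ - s) • d) (fun _ => d)) :=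
    continuous_actionDensity h.continuous_F h.continuous_L (by fun_prop) continuous_const
  have hint_seg : IntervalIntegrable (actionDensity F L α γh γh') volume s (s + 1) :=
    (hseg_cont.intervalIntegrable _ _).congr hseg.symm
  have hint_follow : IntervalIntegrable (actionDensity F L α γh γh') volume (s + 1) t :=
    ((intervalIntegrable_iff_integrableOn_Ioc_of_le hst).2
      (hint.mono_set Ioc_subset_Iic_self)).congr hfollow.symm
  refine ⟨_, ⟨γh, γh', hac', ⟨k, hstart⟩, hend, hint_seg.trans hint_follow, rfl⟩, ?_⟩
  have hseg_le : ∫ τ in s..s + 1, actionDensity F L α γh γh' τ ≤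
      D * ∫ τ in Iic (s + 1), exp (F τ) := by
    rw [intervalIntegral.integral_congr_ae (ae_of_all _ fun τ hτ => hseg hτ),
      intervalIntegral.integral_of_le (by linarith)]
    exact setIntegral_actionDensity_le_mul h.nonneg h.upper (h.integrableOn_exp _)
      measurableSet_Ioc Ioc_subset_Iic_self (fun _ _ => hd) hseg_cont.integrableOn_Ioc
  have hhead := neg_mul_le_setIntegral_actionDensity h.nonneg h.lower (h.integrableOn_exp (s + 1))
    measurableSet_Iic subset_rfl (hint.mono_set (Iic_subset_Iic.2 hst))
  have htail := intervalIntegral.integral_Iic_sub_Iic (hint.mono_set (Iic_subset_Iic.2 hst)) hint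
  rw [← intervalIntegral.integral_congr_ae (ae_of_all _ fun τ hτ => hfollow hτ)] at htail
  rw [← intervalIntegral.integral_add_adjacent_intervals hint_seg hint_follow, hr]
  linarith

lemma ActionBounds.abs_hAct_sub_le (h : ActionBounds F L α D) {s t : ℝ} (hst : s + 1 ≤ t)
    (z x : Evec n) :
    |hAct F L α s t z x - exp (F t) * uWK F L α x t| ≤ 2 * D * ∫ τ in Iic (s + 1), exp (F τ) := by
  have hst' : s ≤ t := by linarith
  obtain ⟨r, hr⟩ := h.wkSet_nonempty x t
  obtain ⟨ρ, hρ, -⟩ := h.exists_mem_finiteActions_le hst z hr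
  have hupper := csInf_le_mul_csInf_add_s10 (exp_pos (F t)) (h.bddBelow_finiteActions hst' z x)
    ⟨r, hr⟩ fun r hr => h.exists_mem_finiteActions_le hst z hr
  have hlower := mul_csInf_le_csInf_add (exp_pos (F t)).le (h.bddBelow_wkSet x t) ⟨ρ, hρ⟩
    fun ρ hρ => h.exists_mem_wkSet_le hst' hρ
  have htail_mono : D * ∫ τ in Iic s, exp (F τ) ≤ D * ∫ τ in Iic (s + 1), exp (F τ) := by
    refine mul_le_mul_of_nonneg_left (setIntegral_mono_set (h.integrableOn_exp _)
      (ae_of_all _ fun τ => (exp_pos _).le) (Iic_subset_Iic.2 (by linarith)).eventuallyLE) h.nonneg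
  have htail_nonneg : 0 ≤ D * ∫ τ in Iic (s + 1), exp (F τ) :=
    mul_nonneg h.nonneg (setIntegral_nonneg measurableSet_Iic fun τ _ => (exp_pos _).le)
  rw [hAct_eq_sInf_finiteActions, uWK, abs_le]
  constructor <;> linarith

end Action

theorem finite_horizon_action_uniform_convergence_general
    (n : ℕ)
    (f F : ℝ → ℝ)
    (hf : Continuous f) (hfper : ∀ t, f (t + 1) = f t)
    (hfmean : 0 < ∫ t in (0:ℝ)..1, f t)
    (hF : ∀ t, F t = ∫ τ in (0:ℝ)..t, f τ)
    (L : Evec n → Evec n → ℝ → ℝ)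
    (hLsm : ContDiff ℝ 2 (fun q : Evec n × Evec n × ℝ => L q.1 q.2.1 q.2.2))
    (hLxper : ∀ (k : Fin n → ℤ) (x v : Evec n) (t : ℝ), L (x + intVec k) v t = L x v t)
    (hLtper : ∀ (x v : Evec n) (t : ℝ), L x v (t + 1) = L x v t)
    (hLsuper : ∀ k : ℝ, 0 ≤ k → ∃ C : ℝ, ∀ x v t, k * ‖v‖ - C ≤ L x v t)
    (α : ℝ) :
    ∀ ε : ℝ, 0 < ε → ∃ S : ℝ, ∀ s : ℝ, s ≤ S →
      ∀ (z x : Evec n) (t : ℝ), s + 1 ≤ t →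
        |hAct F L α s t z x - Real.exp (F t) * uWK F L α x t| ≤ ε := by
  intro ε hε
  have hF' : F = fun u => ∫ τ in (0 : ℝ)..u, f τ := funext hF
  obtain ⟨C, hC⟩ := hLsuper 0 le_rfl
  obtain ⟨M, hM⟩ :=
    exists_forall_le_of_periodic hLsm.continuous hLxper hLtper (isCompact_unitCube n)
  have hbounds : ActionBounds F L α (max (C - α) (M + α)) := by
    refine ⟨?_, hLsm.continuous, fun x v τ => ?_, fun x v hv τ => ?_, fun b => ?_⟩
    · rw [hF']
      exact intervalIntegral.continuous_primitive (fun a b => hf.intervalIntegrable a b) 0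
    · linarith [hC x v τ, le_max_left (C - α) (M + α)]
    · linarith [hM x v hv τ, le_max_right (C - α) (M + α)]
    · rw [hF']
      exact integrableOn_exp_primitive_Iic hf hfper hfmean b
  have htail : Tendsto (fun s => 2 * max (C - α) (M + α) * ∫ τ in Iic (s + 1), exp (F τ))
      atBot (nhds 0) := by
    simpa using (tendsto_integral_Iic_zero (tendsto_atBot_add_const_right _ 1 tendsto_id)).const_mul
      (2 * max (C - α) (M + α))
  obtain ⟨S, hS⟩ := eventually_atBot.1 (htail.eventually (eventually_le_nhds hε))
  exact ⟨S, fun s hs z x t ht => (hbounds.abs_hAct_sub_le ht z x).trans (hS s hs)⟩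

/-- The finite-horizon minimal actions converge to
`e^{F(t)} u_α⁻(x,t)` as `s → -∞`, uniformly in `z`, `x` and `t ≥ s + 1`. -/
theorem finite_horizon_action_uniform_convergence
    (n : ℕ) (hn : 1 ≤ n)
    (f F : ℝ → ℝ)
    (hf : Continuous f) (hfper : ∀ t, f (t + 1) = f t)
    (hfmean : 0 < ∫ t in (0:ℝ)..1, f t)
    (hF : ∀ t, F t = ∫ τ in (0:ℝ)..t, f τ)
    (L : Evec n → Evec n → ℝ → ℝ)
    (hLsm : ContDiff ℝ 2 (fun q : Evec n × Evec n × ℝ => L q.1 q.2.1 q.2.2))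
    (hLxper : ∀ (k : Fin n → ℤ) (x v : Evec n) (t : ℝ), L (x + intVec k) v t = L x v t)
    (hLtper : ∀ (x v : Evec n) (t : ℝ), L x v (t + 1) = L x v t)
    (hLconv : ∀ (x : Evec n) (t : ℝ) (v w : Evec n), w ≠ 0 →
      0 < iteratedFDeriv ℝ 2 (fun v' => L x v' t) v ![w, w])
    (hLsuper : ∀ k : ℝ, 0 ≤ k → ∃ C : ℝ, ∀ x v t, k * ‖v‖ - C ≤ L x v t)
    (hcomp : ∀ (x₀ v₀ : Evec n) (t₀ : ℝ), ∃ γ : ℝ → Evec n,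
      ContDiff ℝ 2 γ ∧ γ t₀ = x₀ ∧ deriv γ t₀ = v₀ ∧
      ∀ t : ℝ, HasDerivAt
        (fun σ => fderiv ℝ (fun v => L (γ σ) v σ) (deriv γ σ))
        (fderiv ℝ (fun y => L y (deriv γ t) t) (γ t)
          - f t • fderiv ℝ (fun v => L (γ t) v t) (deriv γ t)) t)
    (α : ℝ) :
    ∀ ε : ℝ, 0 < ε → ∃ S : ℝ, ∀ s : ℝ, s ≤ S →
      ∀ (z x : Evec n) (t : ℝ), s + 1 ≤ t →
        |hAct F L α s t z x - Real.exp (F t) * uWK F L α x t| ≤ ε :=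
  finite_horizon_action_uniform_convergence_general n f F hf hfper hfmean hF L hLsm hLxper hLtper
    hLsuper α
end
end

section
/- (Asymptotic momentum bound for the damped mechanical equation) Let V : ℝ × ℝ → ℝ be C¹ and 1-periodic in each variable, let x : [0,∞) → ℝ be continuous, and let p : [0,∞) → ℝ be differentiable with p'(t) = −∂_x V(x(t),t) − f(t) p(t) for all t ≥ 0. Then limsup_{t→+∞} |p(t)| ≤ (e^{2k₀+[f]}/[f]) · sup_{(x,t)} |∂_x V(x,t)|. -/
/-! Multiplying by the integrating factor `e^{F}` turns the equation into
`(e^{F} p)' = -e^{F} ∂ₓV(x, t)`. Since `F (t + 1) = F t + [f]`, the function `F t - [f] t` is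
1-periodic, so `[f] t - ([f] + k₀) ≤ F t ≤ [f] t + k₀`. Integrating the bound
`|(e^{F} p)'| ≤ M e^{[f] t + k₀}` with `M = sup |∂ₓV|` and dividing by `e^{F T}` gives
`|p T| ≤ e^{[f] + k₀ - [f] T} |p 0| + e^{2 k₀ + [f]} M / [f]`, whose first term dies out. -/

open MeasureTheory Real Filter Function Set Topology

theorem Function.Periodic.deriv {𝕜 E : Type*} [NontriviallyNormedField 𝕜] [NormedAddCommGroup E]
    [NormedSpace 𝕜 E] {f : 𝕜 → E} {c : 𝕜} (hf : Periodic f c) : Periodic (deriv f) c := by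
  intro x
  rw [← deriv_comp_add_const, show (fun y => f (y + c)) = f from funext hf]

theorem ContDiff.continuous_deriv_fst {𝕜 E F : Type*} [NontriviallyNormedField 𝕜]
    [NormedAddCommGroup E] [NormedSpace 𝕜 E] [NormedAddCommGroup F] [NormedSpace 𝕜 F]
    {W : 𝕜 × E → F} (hW : ContDiff 𝕜 1 W) :
    Continuous fun q : 𝕜 × E => deriv (fun y => W (y, q.2)) q.1 := by
  have hpartial : ∀ q : 𝕜 × E, deriv (fun y => W (y, q.2)) q.1 = fderiv 𝕜 W q (1, 0) := by
    rintro ⟨a, b⟩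
    have hline : HasDerivAt (fun y : 𝕜 => (y, b)) ((1 : 𝕜), (0 : E)) a :=
      (hasDerivAt_id a).prodMk (hasDerivAt_const a b)
    exact ((hW.differentiable one_ne_zero (a, b)).hasFDerivAt.comp_hasDerivAt a hline).deriv
  simp only [hpartial]
  exact (hW.continuous_fderiv one_ne_zero).clm_apply continuous_const

theorem isCompact_range_of_periodic_prod {α : Type*} [TopologicalSpace α] {h : ℝ × ℝ → α}
    {c d : ℝ} (hc : 0 < c) (hd : 0 < d) (hh : Continuous h)
    (hper₁ : ∀ b, Periodic (fun a => h (a, b)) c) (hper₂ : ∀ a, Periodic (fun b => h (a, b)) d) :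
    IsCompact (range h) := by
  suffices range h = h '' Icc 0 c ×ˢ Icc 0 d from
    this ▸ (isCompact_Icc.prod isCompact_Icc).image hh
  refine (image_subset_range _ _).antisymm' ?_
  rintro _ ⟨⟨a, b⟩, rfl⟩
  obtain ⟨b', hb', hb⟩ := (hper₂ a).exists_mem_Ico₀ hd b
  obtain ⟨a', ha', ha⟩ := (hper₁ b').exists_mem_Ico₀ hc a
  exact ⟨(a', b'), ⟨Ico_subset_Icc_self ha', Ico_subset_Icc_self hb'⟩, by simp_all⟩

theorem bounds_of_map_add_one {F : ℝ → ℝ} {m k : ℝ} (hm : 0 ≤ m)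
    (hstep : ∀ t, F (t + 1) = F t + m) (hk : ∀ s ∈ Icc (0 : ℝ) 1, |F s| ≤ k) (t : ℝ) :
    m * t - (m + k) ≤ F t ∧ F t ≤ m * t + k := by
  have hper : Periodic (fun t => F t - m * t) 1 := fun t => by simp only [hstep]; ring
  obtain ⟨r, ⟨hr₀, hr₁⟩, hr⟩ := hper.exists_mem_Ico₀ one_pos t
  have hFr := abs_le.mp (hk r ⟨hr₀, hr₁.le⟩)
  constructor <;> nlinarith

theorem abs_sub_le_of_abs_deriv_le_exp {q q' : ℝ → ℝ} {m k M T : ℝ} (hm : 0 < m) (hT : 0 ≤ T)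
    (hq : ∀ t ∈ Ici (0 : ℝ), HasDerivWithinAt q (q' t) (Ici 0) t)
    (hq' : ∀ t, 0 ≤ t → |q' t| ≤ M * exp (m * t + k)) :
    |q T - q 0| ≤ M * exp (m * T + k) / m := by
  have hM : 0 ≤ M := nonneg_of_mul_nonneg_left ((abs_nonneg _).trans (hq' 0 le_rfl)) (exp_pos _)
  have hB : ∀ t, HasDerivAt (fun t => M * exp (m * t + k) / m) (M * exp (m * t + k)) t := by
    intro t
    refine ((((hasDerivAt_id t).const_mul m).add_const k).exp.const_mul M).div_const m
      |>.congr_deriv ?_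
    simp only [id, mul_one]
    field_simp
  refine image_norm_le_of_norm_deriv_right_le_deriv_boundary (f := fun t => q t - q 0)
    (fun t ht =>
      ((hq t ht.1).continuousWithinAt.mono fun _ hs => hs.1).sub continuousWithinAt_const)
    (fun t ht => ((hq t ht.1).mono (Ici_subset_Ici.mpr ht.1)).sub_const (q 0))
    (by simp only [sub_self, norm_zero]; positivity) hB (fun t ht => hq' t ht.1) ⟨hT, le_rfl⟩

theorem abs_le_of_hasDerivWithinAt_damped {f F g p : ℝ → ℝ} {m k M T : ℝ} (hm : 0 < m)
    (hT : 0 ≤ T) (hF : ∀ t, HasDerivAt F (f t) t) (hF₀ : F 0 = 0)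
    (hFbounds : ∀ t, m * t - (m + k) ≤ F t ∧ F t ≤ m * t + k) (hg : ∀ t, |g t| ≤ M)
    (hp : ∀ t ∈ Ici (0 : ℝ), HasDerivWithinAt p (g t - f t * p t) (Ici 0) t) :
    |p T| ≤ exp (m + k - m * T) * |p 0| + exp (2 * k + m) / m * M := by
  have hq : ∀ t ∈ Ici (0 : ℝ),
      HasDerivWithinAt (fun t => exp (F t) * p t) (exp (F t) * g t) (Ici 0) t := fun t ht =>
    (hF t).exp.hasDerivWithinAt.mul (hp t ht) |>.congr_deriv (by ring)
  have hq' : ∀ t, 0 ≤ t → |exp (F t) * g t| ≤ M * exp (m * t + k) := by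
    intro t _
    rw [abs_mul, abs_exp, mul_comm M]
    exact mul_le_mul (exp_le_exp.mpr (hFbounds t).2) (hg t) (abs_nonneg _) (exp_pos _).le
  have hqT := abs_sub_le_of_abs_deriv_le_exp hm hT hq hq'
  simp only [hF₀, exp_zero, one_mul] at hqT
  have hpT : |p T| = exp (-F T) * |exp (F T) * p T| := by
    rw [abs_mul, abs_exp, ← mul_assoc, ← exp_add, neg_add_cancel, exp_zero, one_mul]
  have hdecay : exp (-F T) ≤ exp (m + k - m * T) := exp_le_exp.mpr (by linarith [hFbounds T])
  have hexp : exp (m + k - m * T) * exp (m * T + k) = exp (2 * k + m) := by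
    rw [← exp_add]; congr 1; ring
  calc |p T| ≤ exp (m + k - m * T) * (|p 0| + M * exp (m * T + k) / m) := by
        rw [hpT]
        refine mul_le_mul hdecay ?_ (abs_nonneg _) (exp_pos _).le
        linarith [abs_sub_abs_le_abs_sub (exp (F T) * p T) (p 0)]
    _ = exp (m + k - m * T) * |p 0| + exp (2 * k + m) / m * M := by
        rw [← hexp]; ring

theorem limsup_le_of_eventually_le_of_tendsto {α : Type*} {l : Filter α} [l.NeBot]
    {u v : α → ℝ} {c : ℝ} (hu : IsCoboundedUnder (· ≤ ·) l u) (huv : ∀ᶠ t in l, u t ≤ v t)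
    (hv : Tendsto v l (𝓝 c)) : limsup u l ≤ c :=
  (limsup_le_limsup huv hu hv.isBoundedUnder_le).trans hv.limsup_eq.le

theorem asymptotic_momentum_bound_general
    (f F : ℝ → ℝ) (m k₀ : ℝ)
    (hf : Continuous f) (hfper : ∀ t, f (t + 1) = f t)
    (hm : m = ∫ t in (0:ℝ)..1, f t) (hmpos : 0 < m)
    (hF : ∀ t, F t = ∫ τ in (0:ℝ)..t, f τ)
    (hk₀ : IsGreatest ((fun s => |F s|) '' Set.Icc (0:ℝ) 2) k₀)
    (V : ℝ → ℝ → ℝ)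
    (hV : ContDiff ℝ 1 (fun q : ℝ × ℝ => V q.1 q.2))
    (hVx : ∀ y t, V (y + 1) t = V y t)
    (hVt : ∀ y t, V y (t + 1) = V y t)
    (x p : ℝ → ℝ)
    (hp : ∀ t ∈ Set.Ici (0:ℝ), HasDerivWithinAt p
      (-(deriv (fun y => V y t) (x t)) - f t * p t) (Set.Ici 0) t) :
    Filter.limsup (fun t => |p t|) Filter.atTop ≤
      Real.exp (2 * k₀ + m) / m *
        sSup { y | ∃ a b : ℝ, y = |deriv (fun y' => V y' b) a| } := by
  set M := sSup { y | ∃ a b : ℝ, y = |deriv (fun y' => V y' b) a| }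
  have hF' : ∀ t, HasDerivAt F (f t) t := fun t => by
    rw [funext hF]; exact (hf.integral_hasStrictDerivAt 0 t).hasDerivAt
  have hFstep : ∀ t, F (t + 1) = F t + m := fun t => by
    rw [hF, hF, hm, (show Periodic f 1 from hfper).intervalIntegral_add_eq_add 0 t
      hf.intervalIntegrable, zero_add]
  have hFbounds := bounds_of_map_add_one hmpos.le hFstep fun s hs =>
    hk₀.2 ⟨s, ⟨hs.1, hs.2.trans one_le_two⟩, rfl⟩
  have hM : ∀ a b, |deriv (fun y => V y b) a| ≤ M := by
    have hcompact := isCompact_range_of_periodic_prod one_pos one_pos hV.continuous_deriv_fst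
      (fun b => Periodic.deriv (f := fun y => V y b) fun y => hVx y b)
      (fun a b => by simp only [hVt])
    obtain ⟨C, hC⟩ := isBounded_iff_forall_norm_le.mp hcompact.isBounded
    exact fun a b => le_csSup ⟨C, by rintro _ ⟨a, b, rfl⟩; exact hC _ ⟨(a, b), rfl⟩⟩ ⟨a, b, rfl⟩
  have hpT : ∀ T, 0 ≤ T → |p T| ≤ exp (m + k₀ - m * T) * |p 0| + exp (2 * k₀ + m) / m * M :=
    fun T hT => abs_le_of_hasDerivWithinAt_damped hmpos hT hF' (by simp [hF]) hFbounds
      (fun t => (abs_neg _).trans_le (hM (x t) t)) hp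
  refine limsup_le_of_eventually_le_of_tendsto
    (isCoboundedUnder_le_of_le atTop fun t => abs_nonneg _) (eventually_ge_atTop 0 |>.mono hpT) ?_
  have hdecay : Tendsto (fun T => exp (m + k₀ - m * T)) atTop (𝓝 0) :=
    tendsto_exp_atBot.comp <| tendsto_atBot_add_const_left _ _ <|
      tendsto_neg_atTop_atBot.comp (tendsto_id.const_mul_atTop hmpos)
  simpa using (hdecay.mul_const |p 0|).add_const (exp (2 * k₀ + m) / m * M)

/-- Asymptotic momentum bound for the damped mechanical
equation `p' = -∂ₓV(x,t) - f(t) p`: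
`limsup_{t→+∞} |p(t)| ≤ (e^{2k₀+[f]}/[f]) · sup |∂ₓV|`. -/
theorem asymptotic_momentum_bound
    (f F : ℝ → ℝ) (m k₀ : ℝ)
    (hf : Continuous f) (hfper : ∀ t, f (t + 1) = f t)
    (hm : m = ∫ t in (0:ℝ)..1, f t) (hmpos : 0 < m)
    (hF : ∀ t, F t = ∫ τ in (0:ℝ)..t, f τ)
    (hk₀ : IsGreatest ((fun s => |F s|) '' Set.Icc (0:ℝ) 2) k₀)
    (V : ℝ → ℝ → ℝ)
    (hV : ContDiff ℝ 1 (fun q : ℝ × ℝ => V q.1 q.2))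
    (hVx : ∀ y t, V (y + 1) t = V y t)
    (hVt : ∀ y t, V y (t + 1) = V y t)
    (x p : ℝ → ℝ)
    (hx : ContinuousOn x (Set.Ici 0))
    (hp : ∀ t ∈ Set.Ici (0:ℝ), HasDerivWithinAt p
      (-(deriv (fun y => V y t) (x t)) - f t * p t) (Set.Ici 0) t) :
    Filter.limsup (fun t => |p t|) Filter.atTop ≤
      Real.exp (2 * k₀ + m) / m *
        sSup { y | ∃ a b : ℝ, y = |deriv (fun y' => V y' b) a| } :=
  asymptotic_momentum_bound_general f F m k₀ hf hfper hm hmpos hF hk₀ V hV hVx hVt x p hp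
end
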